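/- arXiv:2408.16297 — 3 statements merged into one kernel-verified Lean document; each statement's English description precedes it below -/
import Mathlib

section
/- Let G be a connected bipartite graph with bipartition V_1, V_2. If G is 2-γ'_MB-critical, then either G is isomorphic to K_{2,m} for some m ≥ 3, or |V_1| ≥ 3 and |V_2| ≥ 3, each V_i contains exactly two bipartite dominating vertices, and every vertex of G other than these four bipartite dominating vertices has degree exactly 2. -/
/-!
Maker–Breaker domination game.  The players Dominator and Staller alternately select
previously unselected vertices of a graph `G`.  Dominator wins if at some point his selected
vertices form a dominating set of `G`; Staller wins if she selects all vertices of the closed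
neighbourhood of some vertex.  Below, `D` always denotes the set of vertices selected by
Dominator so far and `S` the set selected by Staller.
-/

namespace MBD

variable {V : Type*}

/-- `D` is a dominating set of `G`. -/
def IsDomSet (G : SimpleGraph V) (D : Set V) : Prop :=
  ∀ v, v ∈ D ∨ ∃ u ∈ D, G.Adj u v

/-- Dominator is to move.  `DWin G k D S` says that Dominator has a strategy guaranteeing
that his selected set becomes a dominating set of `G` after at most `k` further moves of his
(the game ends when all vertices have been selected). -/
def DWin (G : SimpleGraph V) : ℕ → Set V → Set V → Prop
  | 0, D, _ => IsDomSet G D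
  | (k+1), D, S => IsDomSet G D ∨
      ∃ v ∉ D ∪ S,
        (IsDomSet G (insert v D) ∨
          ((∃ w, w ∉ insert v D ∪ S) ∧
            ∀ w ∉ insert v D ∪ S, DWin G k (insert v D) (insert w S)))

/-- Staller is to move, and Dominator can win using at most `k` further moves of his. -/
def DWinS (G : SimpleGraph V) (k : ℕ) (D S : Set V) : Prop :=
  IsDomSet G D ∨
    ((∃ w, w ∉ D ∪ S) ∧ ∀ w ∉ D ∪ S, DWin G k D (insert w S))

/-- The Maker–Breaker domination number `γ_MB` of `G`: the least `k` such that Dominator,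
moving first (D-game), can win within at most `k` of his moves; `∞` if he cannot win. -/
noncomputable def gammaMB (G : SimpleGraph V) : ℕ∞ :=
  sInf (Nat.cast '' {k : ℕ | DWin G k ∅ ∅})

/-- The Maker–Breaker domination number `γ'_MB` of `G`: the least `k` such that Dominator
can win within at most `k` of his moves in the S-game (Staller moves first); `∞` if he
cannot win. -/
noncomputable def gammaMB' (G : SimpleGraph V) : ℕ∞ :=
  sInf (Nat.cast '' {k : ℕ | DWinS G k ∅ ∅})

/-- Staller has won: she has selected all vertices of the closed neighbourhood `N[v]`
of some vertex `v`. -/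
def IsStallerWin (G : SimpleGraph V) (S : Set V) : Prop :=
  ∃ v, v ∈ S ∧ ∀ u, G.Adj v u → u ∈ S

/-- Staller is to move.  `SWin G k D S` says Staller has a strategy to win using at most `k`
further moves of hers. -/
def SWin (G : SimpleGraph V) : ℕ → Set V → Set V → Prop
  | 0, _, S => IsStallerWin G S
  | (k+1), D, S => IsStallerWin G S ∨
      ∃ v ∉ D ∪ S,
        (IsStallerWin G (insert v S) ∨
          ((∃ w, w ∉ D ∪ insert v S) ∧
            ∀ w ∉ D ∪ insert v S, SWin G k (insert w D) (insert v S)))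

/-- Dominator is to move, and Staller can win within at most `k` further moves of hers. -/
def SWinD (G : SimpleGraph V) (k : ℕ) (D S : Set V) : Prop :=
  IsStallerWin G S ∨
    ((∃ w, w ∉ D ∪ S) ∧ ∀ w ∉ D ∪ S, SWin G k (insert w D) S)

/-- The Staller-Maker–Breaker domination number `γ_SMB` of `G`: the least `k` such that
Staller can win within at most `k` of her moves in the D-game (Dominator starts);
`∞` if she cannot win. -/
noncomputable def gammaSMB (G : SimpleGraph V) : ℕ∞ :=
  sInf (Nat.cast '' {k : ℕ | SWinD G k ∅ ∅})

/-- The Staller-Maker–Breaker domination number `γ'_SMB` of `G`: the least `k` such that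
Staller can win within at most `k` of her moves in the S-game (Staller starts);
`∞` if she cannot win. -/
noncomputable def gammaSMB' (G : SimpleGraph V) : ℕ∞ :=
  sInf (Nat.cast '' {k : ℕ | SWin G k ∅ ∅})

end MBD

open MBD

/-!
If no single vertex dominates, Dominator wins the S-game within two moves exactly when he has a
pair strategy: an answer `v` to Staller's opening with two partners completing it to dominating
pairs.

When both sides have at least three vertices, a dominating pair takes one vertex from each side,
and a vertex with two partners is bipartite dominating, as are its partners; this gives at least
two bipartite dominating vertices on each side. Conversely, two of them on each side already form
a pair strategy, so criticality forbids every edge whose deletion leaves two on each side. This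
bounds their number by two and forces every other vertex to be adjacent exactly to the two
bipartite dominating vertices of the opposite side.

For small sides: a side with at most one vertex makes `G` a star (two pendant vertices at the
centre let Staller win) or `K₁`, `K₂`, where `γ'_MB ≠ 2`; sides `2, 2` give `P₄` or `C₄`, where
deleting the middle edge of a Hamiltonian path leaves a perfect matching, still a pair strategy;
sides `2, m ≥ 3` force `G` to be complete bipartite.
-/

namespace MBD

variable {V : Type*} {G : SimpleGraph V} {D S T : Set V} {v p q x y : V}

theorem not_isDomSet_empty [Nonempty V] : ¬ IsDomSet G ∅ := by
  intro h
  obtain h | ⟨_, h, _⟩ := h (Classical.arbitrary V) <;> exact h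

theorem IsStallerWin.mono {S' : Set V} (h : IsStallerWin G S) (hS : S ⊆ S') :
    IsStallerWin G S' :=
  let ⟨x, hx, hxS⟩ := h
  ⟨x, hS hx, fun u hu => hS (hxS u hu)⟩

theorem not_isDomSet_of_isStallerWin (hS : IsStallerWin G S) (hD : Disjoint D S) :
    ¬ IsDomSet G D := by
  obtain ⟨x, hx, hxS⟩ := hS
  intro h
  obtain hxD | ⟨u, hu, hux⟩ := h x
  · exact hD.notMem_of_mem_left hxD hx
  · exact hD.notMem_of_mem_left hu (hxS u hux.symm)

theorem not_dWin_of_isStallerWin : ∀ {k : ℕ} {D S : Set V},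
    IsStallerWin G S → Disjoint D S → ¬ DWin G k D S
  | 0, _, _, hS, hD, h => not_isDomSet_of_isStallerWin hS hD h
  | _ + 1, D, S, hS, hD, h => by
    rcases h with h | ⟨v, hv, h | ⟨⟨w, hw⟩, h⟩⟩
    · exact not_isDomSet_of_isStallerWin hS hD h
    · have hvS : v ∉ S := fun h => hv (Or.inr h)
      exact not_isDomSet_of_isStallerWin hS (Set.disjoint_insert_left.mpr ⟨hvS, hD⟩) h
    · simp only [Set.mem_union, Set.mem_insert_iff, not_or] at hv hw
      refine not_dWin_of_isStallerWin (hS.mono (Set.subset_insert w S)) ?_ (h w ?_)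
      · simp only [Set.disjoint_insert_left, Set.disjoint_insert_right, Set.mem_insert_iff,
          not_or]
        exact ⟨hw.1, hv.2, hD⟩
      · simp [hw.1.1, hw.1.2, hw.2]

theorem DWin.of_isDomSet (h : IsDomSet G D) : ∀ k, DWin G k D S
  | 0 => h
  | _ + 1 => Or.inl h

theorem DWin.exists_move {k : ℕ} (h : DWin G (k + 1) D S) :
    IsDomSet G D ∨ ∃ v ∉ D ∪ S, ∀ w ∉ insert v D ∪ S, DWin G k (insert v D) (insert w S) := by
  refine h.imp_right fun ⟨v, hv, h⟩ => ⟨v, hv, fun w hw => ?_⟩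
  rcases h with h | ⟨_, h⟩
  exacts [DWin.of_isDomSet h k, h w hw]

theorem dWin_one_iff :
    DWin G 1 D S ↔ IsDomSet G D ∨ ∃ v ∉ D ∪ S, IsDomSet G (insert v D) := by
  refine or_congr_right ⟨fun ⟨v, hv, h⟩ => ⟨v, hv, ?_⟩, fun ⟨v, hv, h⟩ => ⟨v, hv, Or.inl h⟩⟩
  rcases h with h | ⟨⟨w, hw⟩, h⟩
  exacts [h, h w hw]

theorem DWinS.dWin [Nonempty V] {k : ℕ} (h : DWinS G k ∅ ∅) (w : V) : DWin G k ∅ {w} := by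
  rcases h with h | ⟨_, h⟩
  · exact absurd h not_isDomSet_empty
  · simpa using h w (by simp)

theorem gammaMB'_le_of_dWinS {k : ℕ} (h : DWinS G k ∅ ∅) : gammaMB' G ≤ k :=
  sInf_le ⟨k, h, rfl⟩

theorem dWinS_of_gammaMB'_eq {k : ℕ} (h : gammaMB' G = k) : DWinS G k ∅ ∅ := by
  have hne : (Nat.cast '' {k : ℕ | DWinS G k ∅ ∅} : Set ℕ∞).Nonempty := by
    by_contra hne
    rw [Set.not_nonempty_iff_eq_empty] at hne
    simp [gammaMB', hne] at h
  obtain ⟨j, hj, hjk⟩ := csInf_mem hne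
  rwa [← Nat.cast_inj.mp (hjk.trans h)]

theorem DWinS.one_of_card_le_two [Fintype V] (hV : Fintype.card V ≤ 2)
    (h : DWinS G 2 ∅ ∅) : DWinS G 1 ∅ ∅ := by
  refine h.imp_right fun ⟨hw, h⟩ => ⟨hw, fun w hw' => ?_⟩
  rcases h w hw' with h | ⟨v, hv, h | ⟨⟨t, ht⟩, _⟩⟩
  · exact Or.inl h
  · exact Or.inr ⟨v, hv, Or.inl h⟩
  · simp only [Set.mem_union, Set.mem_insert_iff, Set.mem_empty_iff_false, or_false,
      not_or, false_or] at hv ht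
    have := Fintype.two_lt_card_iff.mpr ⟨v, w, t, hv, Ne.symm ht.1, Ne.symm ht.2⟩
    omega

theorem not_dWinS_of_pendant_pair {a t₁ t₂ : V} {k : ℕ} (ht : t₁ ≠ t₂) (ha₁ : a ≠ t₁)
    (ha₂ : a ≠ t₂) (h₁ : ∀ u, G.Adj t₁ u → u = a) (h₂ : ∀ u, G.Adj t₂ u → u = a) :
    ¬ DWinS G k ∅ ∅ := by
  have : Nonempty V := ⟨a⟩
  intro h
  cases k with
  | zero => exact not_isDomSet_empty (h.dWin a)
  | succ k =>
    rcases (h.dWin a).exists_move with h | ⟨v, hv, h⟩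
    · exact not_isDomSet_empty h
    obtain ⟨t, htv, hta, ht⟩ : ∃ t, t ≠ v ∧ t ≠ a ∧ ∀ u, G.Adj t u → u = a := by
      by_cases hv₁ : v = t₁
      · exact ⟨t₂, hv₁ ▸ ht.symm, ha₂.symm, h₂⟩
      · exact ⟨t₁, Ne.symm hv₁, ha₁.symm, h₁⟩
    have hv : v ≠ a := by simpa using hv
    refine not_dWin_of_isStallerWin ⟨t, by simp, fun u hu => by simp [ht u hu]⟩ ?_
      (h t (by simp [htv, hta]))
    simp [htv.symm, hv]

/-- Dominator answers Staller's opening `w` by `v`; whichever of `p`, `q` Staller takes next,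
he completes a dominating pair with the other one. -/
def PairStrategy (G : SimpleGraph V) : Prop :=
  ∀ w, ∃ v ≠ w, ∃ p q, p ≠ q ∧ p ≠ v ∧ p ≠ w ∧ q ≠ v ∧ q ≠ w ∧
    IsDomSet G {v, p} ∧ IsDomSet G {v, q}

def IsPairCritical (G : SimpleGraph V) : Prop :=
  ∀ x y, G.Adj x y → ¬ PairStrategy (G.deleteEdges {s(x, y)})

theorem dWinS_two_of_pairStrategy (h : PairStrategy G) : DWinS G 2 ∅ ∅ := by
  rcases isEmpty_or_nonempty V with hV | hV
  · exact Or.inl isEmptyElim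
  refine Or.inr ⟨⟨Classical.arbitrary V, by simp⟩, fun w _ => ?_⟩
  obtain ⟨v, hvw, p, q, hpq, hpv, hpw, hqv, hqw, hp, hq⟩ := h w
  refine Or.inr ⟨v, by simp [hvw], Or.inr ⟨⟨p, by simp [hpv, hpw]⟩, fun s hs => ?_⟩⟩
  rw [dWin_one_iff]
  by_cases hps : p = s
  · refine Or.inr ⟨q, ?_, by rwa [insert_empty_eq, Set.pair_comm]⟩
    simp only [Set.mem_union, Set.mem_insert_iff] at hs ⊢
    grind
  · refine Or.inr ⟨p, ?_, by rwa [insert_empty_eq, Set.pair_comm]⟩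
    simp only [Set.mem_union, Set.mem_insert_iff] at hs ⊢
    grind

theorem pairStrategy_of_dWinS_two (hG : ∀ v, ¬ IsDomSet G {v}) (h : DWinS G 2 ∅ ∅) :
    PairStrategy G := by
  intro w
  have : Nonempty V := ⟨w⟩
  rcases h.dWin w with h | ⟨v, hv, h | ⟨⟨t, ht⟩, h⟩⟩
  · exact absurd h not_isDomSet_empty
  · exact absurd (by simpa using h) (hG v)
  have hvw : v ≠ w := by simpa using hv
  have partner (s : V) (hs : s ∉ insert v (∅ : Set V) ∪ {w}) :
      ∃ p, p ≠ v ∧ p ≠ w ∧ p ≠ s ∧ IsDomSet G {v, p} := by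
    rcases dWin_one_iff.mp (h s hs) with h | ⟨p, hp, h⟩
    · exact absurd (by simpa using h) (hG v)
    simp only [Set.mem_union, Set.mem_insert_iff, Set.mem_empty_iff_false, or_false,
      Set.mem_singleton_iff, not_or] at hp
    exact ⟨p, hp.1, hp.2.2, hp.2.1, by rwa [insert_empty_eq, Set.pair_comm] at h⟩
  obtain ⟨p, hpv, hpw, -, hp⟩ := partner t ht
  obtain ⟨q, hqv, hqw, hqp, hq⟩ := partner p (by simp [hpv, hpw])
  exact ⟨v, hvw, p, q, hqp.symm, hpv, hpw, hqv, hqw, hp, hq⟩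

theorem isPairCritical_of_gammaMB'_eq_two (h2 : gammaMB' G = 2)
    (hcrit : ∀ e ∈ G.edgeSet, gammaMB' G < gammaMB' (G.deleteEdges {e})) :
    IsPairCritical G := fun x y hxy h => by
  simpa [h2] using
    (hcrit s(x, y) hxy).trans_le (gammaMB'_le_of_dWinS (dWinS_two_of_pairStrategy h))

theorem pairStrategy_of_isDomSet_pairs {x₁ x₂ y₁ y₂ : V} (hx : x₁ ≠ x₂) (hy : y₁ ≠ y₂)
    (h₁₁ : x₁ ≠ y₁) (h₁₂ : x₁ ≠ y₂) (h₂₁ : x₂ ≠ y₁) (h₂₂ : x₂ ≠ y₂)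
    (d₁₁ : IsDomSet G {x₁, y₁}) (d₁₂ : IsDomSet G {x₁, y₂})
    (d₂₁ : IsDomSet G {x₂, y₁}) (d₂₂ : IsDomSet G {x₂, y₂}) : PairStrategy G := by
  intro w
  by_cases hw₁ : w = y₁
  · subst hw₁
    exact ⟨y₂, hy.symm, x₁, x₂, hx, h₁₂, h₁₁, h₂₂, h₂₁, by rwa [Set.pair_comm],
      by rwa [Set.pair_comm]⟩
  by_cases hw₂ : w = y₂
  · subst hw₂
    exact ⟨y₁, hy, x₁, x₂, hx, h₁₁, h₁₂, h₂₁, h₂₂, by rwa [Set.pair_comm],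
      by rwa [Set.pair_comm]⟩
  by_cases hw : w = x₁
  · subst hw
    exact ⟨x₂, Ne.symm hx, y₁, y₂, hy, Ne.symm h₂₁, Ne.symm h₁₁, Ne.symm h₂₂, Ne.symm h₁₂,
      d₂₁, d₂₂⟩
  · exact ⟨x₁, Ne.symm hw, y₁, y₂, hy, Ne.symm h₁₁, Ne.symm hw₁, Ne.symm h₁₂, Ne.symm hw₂,
      d₁₁, d₁₂⟩

theorem pairStrategy_of_perfectMatching {H : SimpleGraph V} {x₁ y₁ x₂ y₂ : V}
    (hV : ∀ z, z = x₁ ∨ z = y₁ ∨ z = x₂ ∨ z = y₂) (h₁ : H.Adj x₁ y₁) (h₂ : H.Adj x₂ y₂)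
    (hx : x₁ ≠ x₂) (hxy : x₁ ≠ y₂) (hyx : y₁ ≠ x₂) (hy : y₁ ≠ y₂) : PairStrategy H := by
  have cover {a b : V} (hab : H.Adj a b) (u : V) (hu : u ∈ ({a, b} : Set V)) (z : V)
      (hz : z ∈ ({a, b} : Set V)) : z = u ∨ H.Adj u z := by
    rcases hu with rfl | rfl <;> rcases hz with rfl | rfl <;> simp [hab, hab.symm]
  have dom (u : V) (hu : u ∈ ({x₁, y₁} : Set V)) (u' : V) (hu' : u' ∈ ({x₂, y₂} : Set V)) :
      IsDomSet H {u, u'} := by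
    intro z
    have hz : z ∈ ({x₁, y₁} : Set V) ∨ z ∈ ({x₂, y₂} : Set V) := by
      simpa only [Set.mem_insert_iff, Set.mem_singleton_iff, or_assoc] using hV z
    rcases hz with hz | hz
    · rcases cover h₁ u hu z hz with rfl | h
      · exact Or.inl (Set.mem_insert z _)
      · exact Or.inr ⟨u, Set.mem_insert u _, h⟩
    · rcases cover h₂ u' hu' z hz with rfl | h
      · exact Or.inl (Set.mem_insert_of_mem _ rfl)
      · exact Or.inr ⟨u', Set.mem_insert_of_mem _ rfl, h⟩
  exact pairStrategy_of_isDomSet_pairs h₁.ne h₂.ne hx hxy hyx hy (dom _ (by simp) _ (by simp))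
    (dom _ (by simp) _ (by simp)) (dom _ (by simp) _ (by simp)) (dom _ (by simp) _ (by simp))

theorem ncard_pair_le (a b : V) : ({a, b} : Set V).ncard ≤ 2 :=
  (Set.ncard_insert_le a {b}).trans (by simp)

theorem eq_pair_of_ncard_eq_two (h : S.ncard = 2) (hx : x ∈ S) (hy : y ∈ S) (hxy : x ≠ y) :
    S = {x, y} :=
  (Set.eq_of_subset_of_ncard_le (Set.pair_subset hx hy) (by rw [h, Set.ncard_pair hxy])
    (Set.finite_of_ncard_pos (by omega))).symm

theorem card_eq_ncard_add_ncard [Fintype V] (hST : S ∪ T = Set.univ) (hdisj : Disjoint S T) :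
    Fintype.card V = S.ncard + T.ncard := by
  rw [← Nat.card_eq_fintype_card, ← Set.ncard_univ, ← hST, Set.ncard_union_eq hdisj]

def bipDomVertices (G : SimpleGraph V) (S T : Set V) : Set V :=
  {x | x ∈ S ∧ ∀ y ∈ T, G.Adj x y}

theorem isDomSet_pair_of_mem_bipDomVertices (hST : S ∪ T = Set.univ)
    (hx : x ∈ bipDomVertices G S T) (hy : y ∈ bipDomVertices G T S) : IsDomSet G {x, y} := by
  intro z
  rcases Set.eq_univ_iff_forall.mp hST z with hz | hz
  · exact Or.inr ⟨y, by simp, hy.2 z hz⟩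
  · exact Or.inr ⟨x, by simp, hx.2 z hz⟩

theorem pairStrategy_of_bipDomVertices (hST : S ∪ T = Set.univ) (hdisj : Disjoint S T)
    {a₁ a₂ b₁ b₂ : V} (ha : a₁ ≠ a₂) (hb : b₁ ≠ b₂)
    (ha₁ : a₁ ∈ bipDomVertices G S T) (ha₂ : a₂ ∈ bipDomVertices G S T)
    (hb₁ : b₁ ∈ bipDomVertices G T S) (hb₂ : b₂ ∈ bipDomVertices G T S) : PairStrategy G :=
  have hne {a b : V} (ha : a ∈ bipDomVertices G S T) (hb : b ∈ bipDomVertices G T S) : a ≠ b :=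
    hdisj.ne_of_mem ha.1 hb.1
  pairStrategy_of_isDomSet_pairs ha hb (hne ha₁ hb₁) (hne ha₁ hb₂) (hne ha₂ hb₁) (hne ha₂ hb₂)
    (isDomSet_pair_of_mem_bipDomVertices hST ha₁ hb₁)
    (isDomSet_pair_of_mem_bipDomVertices hST ha₁ hb₂)
    (isDomSet_pair_of_mem_bipDomVertices hST ha₂ hb₁)
    (isDomSet_pair_of_mem_bipDomVertices hST ha₂ hb₂)

theorem mem_bipDomVertices_deleteEdges (h : v ∈ bipDomVertices G S T) (hx : v ≠ x)
    (hy : v ≠ y) : v ∈ bipDomVertices (G.deleteEdges {s(x, y)}) S T :=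
  ⟨h.1, fun z hz => by simp [h.2 z hz, hx, hy]⟩

theorem subset_of_isDomSet_of_subset (hG : G.IsBipartiteWith S T) (hD : IsDomSet G D)
    (hDS : D ⊆ S) : S ⊆ D := by
  intro z hz
  obtain h | ⟨u, hu, huz⟩ := hD z
  · exact h
  · exact absurd (hG.mem_of_mem_adj (hDS hu) huz) (hG.disjoint.notMem_of_mem_left hz)

theorem adj_of_isDomSet_pair (hG : G.IsBipartiteWith S T) (hv : v ∈ S) (hp : p ∈ T)
    (h : IsDomSet G {v, p}) {z : V} (hz : z ∈ T) (hzp : z ≠ p) : G.Adj v z := by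
  obtain hz' | ⟨u, hu, huz⟩ := h z
  · rcases hz' with rfl | rfl
    · exact absurd hz (hG.disjoint.notMem_of_mem_left hv)
    · exact absurd rfl hzp
  · rcases hu with rfl | rfl
    · exact huz
    · exact absurd (hG.mem_of_mem_adj' hz huz) (hG.disjoint.notMem_of_mem_right hp)

section

variable [Finite V]

theorem not_adj_of_two_le_ncard_sdiff
    (hcrit : IsPairCritical G) (hG : G.IsBipartiteWith S T) (hST : S ∪ T = Set.univ)
    (hx : x ∈ S) (hy : y ∈ T)
    (hA : 2 ≤ (bipDomVertices G S T \ {x}).ncard)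
    (hB : 2 ≤ (bipDomVertices G T S \ {y}).ncard) : ¬ G.Adj x y := by
  intro hxy
  obtain ⟨a₁, a₂, ha₁, ha₂, ha⟩ := (Set.one_lt_ncard_iff).mp hA
  obtain ⟨b₁, b₂, hb₁, hb₂, hb⟩ := (Set.one_lt_ncard_iff).mp hB
  have hne := hG.disjoint.ne_of_mem
  exact hcrit x y hxy <| pairStrategy_of_bipDomVertices hST hG.disjoint ha hb
    (mem_bipDomVertices_deleteEdges ha₁.1 ha₁.2 (hne ha₁.1.1 hy))
    (mem_bipDomVertices_deleteEdges ha₂.1 ha₂.2 (hne ha₂.1.1 hy))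
    (mem_bipDomVertices_deleteEdges hb₁.1 (hne hx hb₁.1.1).symm hb₁.2)
    (mem_bipDomVertices_deleteEdges hb₂.1 (hne hx hb₂.1.1).symm hb₂.2)

theorem not_isDomSet_singleton (hG : G.IsBipartiteWith S T) (hST : S ∪ T = Set.univ)
    (hS : 2 ≤ S.ncard) (hT : 2 ≤ T.ncard) (v : V) : ¬ IsDomSet G {v} := by
  intro h
  rcases Set.eq_univ_iff_forall.mp hST v with hv | hv
  · have := Set.ncard_le_ncard
      (subset_of_isDomSet_of_subset hG h (Set.singleton_subset_iff.2 hv))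
    simp only [Set.ncard_singleton] at this
    omega
  · have := Set.ncard_le_ncard
      (subset_of_isDomSet_of_subset hG.symm h (Set.singleton_subset_iff.2 hv))
    simp only [Set.ncard_singleton] at this
    omega

theorem mem_of_isDomSet_pair (hG : G.IsBipartiteWith S T) (hST : S ∪ T = Set.univ)
    (hS : 3 ≤ S.ncard) (hv : v ∈ S) (h : IsDomSet G {v, p}) : p ∈ T := by
  refine (Set.eq_univ_iff_forall.mp hST p).resolve_left fun hp => ?_
  have := Set.ncard_le_ncard (subset_of_isDomSet_of_subset hG h (Set.pair_subset hv hp))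
  have := ncard_pair_le v p
  omega

theorem mem_bipDomVertices_of_isDomSet_pairs (hG : G.IsBipartiteWith S T)
    (hST : S ∪ T = Set.univ) (hS : 3 ≤ S.ncard) (hv : v ∈ S) (hpq : p ≠ q)
    (hp : IsDomSet G {v, p}) (hq : IsDomSet G {v, q}) :
    v ∈ bipDomVertices G S T ∧ p ∈ bipDomVertices G T S ∧ q ∈ bipDomVertices G T S := by
  have hpT := mem_of_isDomSet_pair hG hST hS hv hp
  have hqT := mem_of_isDomSet_pair hG hST hS hv hq
  have hvA : v ∈ bipDomVertices G S T := by
    refine ⟨hv, fun z hz => ?_⟩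
    by_cases hzp : z = p
    · exact adj_of_isDomSet_pair hG hv hqT hq hz (hzp ▸ hpq)
    · exact adj_of_isDomSet_pair hG hv hpT hp hz hzp
  have partner (r : V) (hr : r ∈ T) (h : IsDomSet G {v, r}) : r ∈ bipDomVertices G T S := by
    refine ⟨hr, fun z hz => ?_⟩
    by_cases hzv : z = v
    · exact hzv ▸ (hvA.2 r hr).symm
    · exact adj_of_isDomSet_pair hG.symm hr hv (by rwa [Set.pair_comm]) hz hzv
  exact ⟨hvA, partner p hpT hp, partner q hqT hq⟩

theorem two_le_ncard_bipDomVertices (hG : G.IsBipartiteWith S T) (hST : S ∪ T = Set.univ)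
    (hS : 3 ≤ S.ncard) (hT : 3 ≤ T.ncard) (hP : PairStrategy G) :
    2 ≤ (bipDomVertices G S T).ncard ∧ 2 ≤ (bipDomVertices G T S).ncard := by
  have hTS : T ∪ S = Set.univ := Set.union_comm S T ▸ hST
  have rich (w : V) : ∃ v ≠ w,
      (v ∈ bipDomVertices G S T ∧ 2 ≤ (bipDomVertices G T S).ncard) ∨
      (v ∈ bipDomVertices G T S ∧ 2 ≤ (bipDomVertices G S T).ncard) := by
    obtain ⟨v, hvw, p, q, hpq, -, -, -, -, hp, hq⟩ := hP w
    refine ⟨v, hvw, ?_⟩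
    rcases Set.eq_univ_iff_forall.mp hST v with hv | hv
    · obtain ⟨hvA, hpB, hqB⟩ := mem_bipDomVertices_of_isDomSet_pairs hG hST hS hv hpq hp hq
      exact Or.inl ⟨hvA, (Set.one_lt_ncard_iff).mpr ⟨p, q, hpB, hqB, hpq⟩⟩
    · obtain ⟨hvB, hpA, hqA⟩ :=
        mem_bipDomVertices_of_isDomSet_pairs hG.symm hTS hT hv hpq hp hq
      exact Or.inr ⟨hvB, (Set.one_lt_ncard_iff).mpr ⟨p, q, hpA, hqA, hpq⟩⟩
  obtain ⟨s, -⟩ := Set.nonempty_of_ncard_ne_zero (by omega : S.ncard ≠ 0)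
  obtain ⟨v₁, -, h₁⟩ := rich s
  obtain ⟨v₂, hv, h₂⟩ := rich v₁
  rcases h₁ with ⟨h₁, hB⟩ | ⟨h₁, hA⟩ <;> rcases h₂ with ⟨h₂, hB'⟩ | ⟨h₂, hA'⟩
  · exact ⟨(Set.one_lt_ncard_iff).mpr ⟨v₂, v₁, h₂, h₁, hv⟩, hB⟩
  · exact ⟨hA', hB⟩
  · exact ⟨hA, hB'⟩
  · exact ⟨hA, (Set.one_lt_ncard_iff).mpr ⟨v₂, v₁, h₂, h₁, hv⟩⟩

theorem ncard_bipDomVertices_le_two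
    (hcrit : IsPairCritical G) (hG : G.IsBipartiteWith S T) (hST : S ∪ T = Set.univ)
    (hT : 3 ≤ T.ncard)
    (hB : 2 ≤ (bipDomVertices G T S).ncard) : (bipDomVertices G S T).ncard ≤ 2 := by
  by_contra! hA
  obtain ⟨a, ha⟩ :=
    Set.nonempty_of_ncard_ne_zero (by omega : (bipDomVertices G S T).ncard ≠ 0)
  obtain ⟨y, hy, hBy⟩ : ∃ y ∈ T, 2 ≤ (bipDomVertices G T S \ {y}).ncard := by
    by_cases hTB : T ⊆ bipDomVertices G T S
    · obtain ⟨y, hy⟩ := Set.nonempty_of_ncard_ne_zero (by omega : T.ncard ≠ 0)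
      have := Set.ncard_le_ncard hTB
      have := Set.pred_ncard_le_ncard_sdiff_singleton (bipDomVertices G T S) y
      exact ⟨y, hy, by omega⟩
    · obtain ⟨y, hy, hyB⟩ := Set.not_subset.mp hTB
      exact ⟨y, hy, by rwa [Set.sdiff_singleton_eq_self hyB]⟩
  refine not_adj_of_two_le_ncard_sdiff hcrit hG hST ha.1 hy ?_ hBy (ha.2 y hy)
  rw [Set.ncard_sdiff_singleton_of_mem ha]
  omega

theorem neighborSet_eq_bipDomVertices
    (hcrit : IsPairCritical G) (hG : G.IsBipartiteWith S T) (hST : S ∪ T = Set.univ)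
    (hA : 2 ≤ (bipDomVertices G S T).ncard) (hB : 2 ≤ (bipDomVertices G T S).ncard)
    (hv : v ∈ S) (hvA : v ∉ bipDomVertices G S T) :
    G.neighborSet v = bipDomVertices G T S := by
  ext u
  refine ⟨fun hvu => ?_, fun hu => (hu.2 v hv).symm⟩
  by_contra huB
  refine not_adj_of_two_le_ncard_sdiff hcrit hG hST hv (hG.mem_of_mem_adj hv hvu) ?_ ?_ hvu
  · rwa [Set.sdiff_singleton_eq_self hvA]
  · rwa [Set.sdiff_singleton_eq_self huB]

end

theorem bipDomVertices_structure [Fintype V] [DecidableRel G.Adj]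
    (hcrit : IsPairCritical G) (hG : G.IsBipartiteWith S T) (hST : S ∪ T = Set.univ)
    (hS : 3 ≤ S.ncard) (hT : 3 ≤ T.ncard)
    (hP : PairStrategy G) :
    (bipDomVertices G S T).ncard = 2 ∧ (bipDomVertices G T S).ncard = 2 ∧
      ∀ v, v ∉ bipDomVertices G S T ∪ bipDomVertices G T S → G.degree v = 2 := by
  have hTS : T ∪ S = Set.univ := Set.union_comm S T ▸ hST
  obtain ⟨hA, hB⟩ := two_le_ncard_bipDomVertices hG hST hS hT hP
  have hA' := ncard_bipDomVertices_le_two hcrit hG hST hT hB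
  have hB' := ncard_bipDomVertices_le_two hcrit hG.symm hTS hS hA
  refine ⟨by omega, by omega, fun v hv => ?_⟩
  rw [Set.mem_union, not_or] at hv
  rw [← G.card_neighborSet_eq_degree, ← Nat.card_eq_fintype_card, Nat.card_coe_set_eq]
  rcases Set.eq_univ_iff_forall.mp hST v with hvS | hvT
  · rw [neighborSet_eq_bipDomVertices hcrit hG hST hA hB hvS hv.1]
    omega
  · rw [neighborSet_eq_bipDomVertices hcrit hG.symm hTS hB hA hvT hv.2]
    omega

theorem forall_adj_of_ncard_eq_two [Finite V] (hG : G.IsBipartiteWith S T)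
    (hST : S ∪ T = Set.univ) (hP : PairStrategy G) (hS : S.ncard = 2) (hT : 3 ≤ T.ncard) :
    ∀ x ∈ S, ∀ y ∈ T, G.Adj x y := by
  intro x hx y hy
  by_contra hnadj
  obtain ⟨b, hb, hbx⟩ := Set.exists_ne_of_one_lt_ncard (by omega : 1 < S.ncard) x
  have hSxb := eq_pair_of_ncard_eq_two hS hx hb hbx.symm
  obtain ⟨v, hvb, p, q, hpq, hpv, hpb, hqv, hqb, hp, hq⟩ := hP b
  have mem_S {z : V} (hz : z ∈ S) (hzb : z ≠ b) : z = x := by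
    rw [hSxb] at hz
    exact hz.resolve_right hzb
  -- A dominating pair avoiding `b` contains `x`, as two vertices of `T` cannot dominate `T`,
  -- and `y`, as no other vertex is left to dominate it.
  have key (u : V) (hub : u ≠ b) (hu : IsDomSet G {v, u}) :
      x ∈ ({v, u} : Set V) ∧ y ∈ ({v, u} : Set V) := by
    constructor
    · by_contra hx'
      have hvuT : ({v, u} : Set V) ⊆ T := by
        intro z hz
        refine (Set.eq_univ_iff_forall.mp hST z).resolve_left fun hzS => hx' ?_
        rw [← mem_S hzS (by rcases hz with rfl | rfl <;> assumption)]
        exact hz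
      have := Set.ncard_le_ncard (subset_of_isDomSet_of_subset hG.symm hu hvuT)
      have := ncard_pair_le v u
      omega
    · obtain h | ⟨w, hw, hwy⟩ := hu y
      · exact h
      · have hwx := mem_S (hG.mem_of_mem_adj' hy hwy)
          (by rcases hw with rfl | rfl <;> assumption)
        exact absurd (hwx ▸ hwy) hnadj
  have hxy : x ≠ y := hG.disjoint.ne_of_mem hx hy
  obtain ⟨hxp, hyp⟩ := key p hpb hp
  obtain ⟨hxq, hyq⟩ := key q hqb hq
  simp only [Set.mem_insert_iff, Set.mem_singleton_iff] at hxp hyp hxq hyq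
  grind

theorem nonempty_iso_completeBipartiteGraph [Finite V] (hG : G.IsBipartiteWith S T)
    (hST : S ∪ T = Set.univ) (hc : ∀ x ∈ S, ∀ y ∈ T, G.Adj x y) :
    Nonempty (G ≃g completeBipartiteGraph (Fin S.ncard) (Fin T.ncard)) := by
  classical
  have hT (a : V) : a ∉ S ↔ a ∈ T :=
    ⟨(Set.eq_univ_iff_forall.mp hST a).resolve_left, fun h => hG.disjoint.notMem_of_mem_right h⟩
  let e : V ≃ S ⊕ T := (Equiv.Set.sumCompl S).symm.trans
    (Equiv.sumCongr (Equiv.refl S) (Equiv.subtypeEquivRight hT))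
  let i : G ≃g completeBipartiteGraph S T := ⟨e, fun {a b} => by
    by_cases ha : a ∈ S <;> by_cases hb : b ∈ S <;>
      simp only [e, ha, hb, Equiv.trans_apply, Equiv.Set.sumCompl_symm_apply_of_mem,
        Equiv.Set.sumCompl_symm_apply_of_notMem, not_false_eq_true, Equiv.sumCongr_apply,
        Equiv.coe_refl, Sum.map_inl, Sum.map_inr, id_eq, completeBipartiteGraph_adj,
        Sum.isLeft_inl, Sum.isLeft_inr, Sum.isRight_inl, Sum.isRight_inr, Bool.false_eq_true,
        and_self, and_true, and_false, or_self, or_true, or_false, true_iff, false_iff]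
    · exact fun h => hG.disjoint.notMem_of_mem_left hb (hG.mem_of_mem_adj ha h)
    · exact hc a ha b ((hT b).mp hb)
    · exact (hc b hb a ((hT a).mp ha)).symm
    · exact fun h => hG.disjoint.notMem_of_mem_right ((hT b).mp hb)
        (hG.symm.mem_of_mem_adj ((hT a).mp ha) h)⟩
  exact ⟨i.trans (SimpleGraph.completeBipartiteGraphCongr (Finite.equivFinOfCardEq rfl)
    (Finite.equivFinOfCardEq rfl))⟩

theorem exists_forall_adj_of_ncard_eq_two (hconn : G.Connected) (hG : G.IsBipartiteWith S T)
    (hS : S.ncard = 2) : ∃ y, ∀ x ∈ S, G.Adj x y := by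
  obtain ⟨a, b, hab, rfl⟩ := Set.ncard_eq_two.mp hS
  have ha : a ∈ ({a, b} : Set V) := Set.mem_insert a {b}
  have hb : b ∈ ({a, b} : Set V) := Set.mem_insert_of_mem a rfl
  obtain ⟨W⟩ := hconn.preconnected a b
  have hbN : b ∉ insert a (G.neighborSet a) := by
    rintro (h | h)
    · exact hab h.symm
    · exact hG.disjoint.notMem_of_mem_left hb (hG.mem_of_mem_adj ha h)
  obtain ⟨d, -, hd₁, hd₂⟩ := W.exists_boundary_dart _ (Set.mem_insert a _) hbN
  rcases hd₁ with hd₁ | hd₁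
  · exact absurd (Or.inr (hd₁ ▸ d.adj)) hd₂
  have hdb : d.snd = b := by
    have hdT := hG.mem_of_mem_adj ha hd₁
    rcases hG.symm.mem_of_mem_adj hdT d.adj with h | h
    · exact absurd (Or.inl h) hd₂
    · exact h
  refine ⟨d.fst, ?_⟩
  rintro x (rfl | rfl)
  · exact hd₁
  · exact hdb ▸ d.adj.symm

theorem exists_adj_pairStrategy_deleteEdges (hconn : G.Connected) (hG : G.IsBipartiteWith S T)
    (hST : S ∪ T = Set.univ) (hS : S.ncard = 2) (hT : T.ncard = 2) :
    ∃ u w, G.Adj u w ∧ PairStrategy (G.deleteEdges {s(u, w)}) := by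
  obtain ⟨y, hy⟩ := exists_forall_adj_of_ncard_eq_two hconn hG hS
  obtain ⟨s, hs⟩ := Set.nonempty_of_ncard_ne_zero (by omega : S.ncard ≠ 0)
  have hyT : y ∈ T := hG.mem_of_mem_adj hs (hy s hs)
  obtain ⟨y', hy'T, hy'y⟩ := Set.exists_ne_of_one_lt_ncard (by omega : 1 < T.ncard) y
  have : Nontrivial V := ⟨⟨y', y, hy'y⟩⟩
  obtain ⟨x', hx'⟩ := hconn.preconnected.exists_adj_of_nontrivial y'
  have hx'S : x' ∈ S := hG.mem_of_mem_adj' hy'T hx'.symm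
  obtain ⟨x, hxS, hxx'⟩ := Set.exists_ne_of_one_lt_ncard (by omega : 1 < S.ncard) x'
  have hne := hG.disjoint.ne_of_mem
  -- `x - y - x' - y'` is a path; deleting its middle edge leaves a perfect matching.
  refine ⟨y, x', (hy x' hx'S).symm, pairStrategy_of_perfectMatching (x₁ := x) (y₁ := y)
    (x₂ := x') (y₂ := y') (fun z => ?_) ?_ ?_ hxx' (hne hxS hy'T) (hne hx'S hyT).symm hy'y.symm⟩
  · rcases Set.eq_univ_iff_forall.mp hST z with hz | hz
    · rw [eq_pair_of_ncard_eq_two hS hxS hx'S hxx'] at hz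
      rcases hz with rfl | rfl <;> simp
    · rw [eq_pair_of_ncard_eq_two hT hyT hy'T hy'y.symm] at hz
      rcases hz with rfl | rfl <;> simp
  · simp [hy x hxS, hxx', hne hxS hyT]
  · simp [hx'.symm, hne hx'S hyT, hy'y]

theorem two_le_ncard_of_dWinS_two [Fintype V] (hconn : G.Connected)
    (hG : G.IsBipartiteWith S T) (hST : S ∪ T = Set.univ) (hwin : DWinS G 2 ∅ ∅)
    (hno : ¬ DWinS G 1 ∅ ∅) : 2 ≤ S.ncard := by
  by_contra! hS
  by_cases hT : 2 ≤ T.ncard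
  · obtain ⟨t₁, t₂, ht₁, ht₂, ht⟩ := (Set.one_lt_ncard_iff).mp hT
    have : Nontrivial V := ⟨⟨t₁, t₂, ht⟩⟩
    obtain ⟨a, ha⟩ := hconn.preconnected.exists_adj_of_nontrivial t₁
    have pendant {t : V} (ht : t ∈ T) (u : V) (hu : G.Adj t u) : u = a :=
      (Set.ncard_le_one).mp (by omega) u (hG.mem_of_mem_adj' ht hu.symm)
        a (hG.mem_of_mem_adj' ht₁ ha.symm)
    have ha₂ : a ≠ t₂ := hG.disjoint.ne_of_mem (hG.mem_of_mem_adj' ht₁ ha.symm) ht₂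
    exact not_dWinS_of_pendant_pair ht ha.ne.symm ha₂ (pendant ht₁) (pendant ht₂) hwin
  · have hV := card_eq_ncard_add_ncard hST hG.disjoint
    exact hno (hwin.one_of_card_le_two (by omega))

end MBD

/-- Let `G` be a connected bipartite graph with bipartition `V₁, V₂`.  If `G` is
`2`-`γ'_MB`-critical, then either `G` is isomorphic to `K_{2,m}` for some `m ≥ 3`, or
`|V₁| ≥ 3` and `|V₂| ≥ 3`, each `Vᵢ` contains exactly two bipartite dominating vertices
(vertices adjacent to every vertex of the opposite side), and every vertex of `G` other than
these four has degree exactly `2`. -/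
theorem bipartite_two_gammaMB'_critical_structure {V : Type*} [Fintype V]
    (G : SimpleGraph V) [DecidableRel G.Adj] (hG : G.Connected) (V1 V2 : Set V)
    (hpart : V1 ∪ V2 = Set.univ) (hdisj : Disjoint V1 V2)
    (hbip : ∀ u v, G.Adj u v → (u ∈ V1 ∧ v ∈ V2) ∨ (u ∈ V2 ∧ v ∈ V1))
    (h2 : gammaMB' G = 2)
    (hcrit : ∀ e ∈ G.edgeSet, gammaMB' G < gammaMB' (G.deleteEdges {e})) :
    (∃ m : ℕ, 3 ≤ m ∧ Nonempty (G ≃g completeBipartiteGraph (Fin 2) (Fin m))) ∨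
      (3 ≤ V1.ncard ∧ 3 ≤ V2.ncard ∧
        {x | x ∈ V1 ∧ ∀ y ∈ V2, G.Adj x y}.ncard = 2 ∧
        {x | x ∈ V2 ∧ ∀ y ∈ V1, G.Adj x y}.ncard = 2 ∧
        ∀ v, v ∉ {x | x ∈ V1 ∧ ∀ y ∈ V2, G.Adj x y} ∪ {x | x ∈ V2 ∧ ∀ y ∈ V1, G.Adj x y} →
          G.degree v = 2) := by
  have hB : G.IsBipartiteWith V1 V2 := ⟨hdisj, fun u v h => hbip u v h⟩
  have hpart' : V2 ∪ V1 = Set.univ := Set.union_comm V1 V2 ▸ hpart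
  have hwin : DWinS G 2 ∅ ∅ := dWinS_of_gammaMB'_eq h2
  have hno : ¬ DWinS G 1 ∅ ∅ := fun h => by simpa [h2] using gammaMB'_le_of_dWinS h
  have hS := two_le_ncard_of_dWinS_two hG hB hpart hwin hno
  have hT := two_le_ncard_of_dWinS_two hG hB.symm hpart' hwin hno
  have hP : PairStrategy G := pairStrategy_of_dWinS_two (not_isDomSet_singleton hB hpart hS hT) hwin
  have hcrit' := isPairCritical_of_gammaMB'_eq_two h2 hcrit
  rcases hS.eq_or_lt with hS | hS <;> rcases hT.eq_or_lt with hT | hT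
  · obtain ⟨u, w, huw, hP'⟩ := exists_adj_pairStrategy_deleteEdges hG hB hpart hS.symm hT.symm
    exact absurd hP' (hcrit' u w huw)
  · refine Or.inl ⟨V2.ncard, hT, hS ▸ ?_⟩
    exact nonempty_iso_completeBipartiteGraph hB hpart
      (forall_adj_of_ncard_eq_two hB hpart hP hS.symm hT)
  · refine Or.inl ⟨V1.ncard, hS, hT ▸ ?_⟩
    exact nonempty_iso_completeBipartiteGraph hB.symm hpart'
      (forall_adj_of_ncard_eq_two hB.symm hpart' hP hT.symm hS)
  · exact Or.inr ⟨hS, hT, bipDomVertices_structure hcrit' hB hpart hS hT hP⟩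
end

section
/- Let G be the graph obtained from two disjoint copies of the complete graph K_3 and one additional vertex x by joining x to exactly one vertex in each copy of K_3. Then G is 2-γ'_MB-critical. (In particular, connected non-bipartite 2-γ'_MB-critical graphs exist.) -/
open MBD

section Bool
variable {V : Type*} [DecidableEq V] [Fintype V]

def domB (adj : V → V → Bool) (D : Finset V) : Bool :=
  decide (∀ v : V, v ∈ D ∨ ∃ u ∈ D, adj u v = true)

def dwinB (adj : V → V → Bool) : ℕ → Finset V → Finset V → Bool
  | 0, D, _ => domB adj D
  | (k+1), D, S => domB adj D ||
      decide (∃ v : V, v ∉ D ∪ S ∧ (domB adj (insert v D) = true ∨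
        ((∃ w : V, w ∉ insert v D ∪ S) ∧
          ∀ w : V, w ∉ insert v D ∪ S → dwinB adj k (insert v D) (insert w S) = true)))

def dwinSB (adj : V → V → Bool) (k : ℕ) (D S : Finset V) : Bool :=
  domB adj D || (decide (∃ w : V, w ∉ D ∪ S) &&
    decide (∀ w : V, w ∉ D ∪ S → dwinB adj k D (insert w S) = true))

variable {G : SimpleGraph V} {adj : V → V → Bool}

lemma isDomSet_iff_domB (hadj : ∀ a b, G.Adj a b ↔ adj a b = true) (D : Finset V) :
    IsDomSet G ↑D ↔ domB adj D = true := by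
  simp [IsDomSet, domB, hadj]

lemma dwin_iff (hadj : ∀ a b, G.Adj a b ↔ adj a b = true) :
    ∀ (k : ℕ) (D S : Finset V), DWin G k ↑D ↑S ↔ dwinB adj k D S = true := by
  intro k
  induction k with
  | zero => intro D S; exact isDomSet_iff_domB hadj D
  | succ k ih =>
    intro D S
    show IsDomSet G ↑D ∨ _ ↔ _
    rw [dwinB]
    simp only [Bool.or_eq_true, decide_eq_true_eq, ← Finset.coe_insert, ← Finset.coe_union,
      Finset.mem_coe, isDomSet_iff_domB hadj, ih]

lemma dwinS_iff (hadj : ∀ a b, G.Adj a b ↔ adj a b = true) (k : ℕ) (D S : Finset V) :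
    DWinS G k ↑D ↑S ↔ dwinSB adj k D S = true := by
  rw [DWinS, dwinSB]
  simp only [Bool.or_eq_true, Bool.and_eq_true, decide_eq_true_eq, ← Finset.coe_insert,
    ← Finset.coe_union, Finset.mem_coe, isDomSet_iff_domB hadj, dwin_iff hadj]

end Bool

section Mono
variable {V : Type*} {G : SimpleGraph V}

lemma dwin_mono : ∀ (k : ℕ) (D S : Set V), DWin G k D S → DWin G (k+1) D S := by
  intro k
  induction k with
  | zero => intro D S h; exact Or.inl h
  | succ k ih =>
    intro D S h
    rcases h with h | ⟨v, hv, h⟩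
    · exact Or.inl h
    refine Or.inr ⟨v, hv, ?_⟩
    rcases h with h | ⟨hw, h⟩
    · exact Or.inl h
    · exact Or.inr ⟨hw, fun w hw => ih _ _ (h w hw)⟩

lemma dwinS_mono {k : ℕ} {D S : Set V} (h : DWinS G k D S) : DWinS G (k+1) D S := by
  rcases h with h | ⟨hw, h⟩
  · exact Or.inl h
  · exact Or.inr ⟨hw, fun w hw => dwin_mono _ _ _ (h w hw)⟩

lemma dwinS_le_mono {j k : ℕ} (hjk : j ≤ k) {D S : Set V} (h : DWinS G j D S) :
    DWinS G k D S := by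
  induction k with
  | zero => simpa [Nat.le_zero.mp hjk] using h
  | succ k ih =>
    rcases Nat.lt_or_ge j (k+1) with h' | h'
    · exact dwinS_mono (ih (Nat.lt_succ_iff.mp h'))
    · simpa [le_antisymm hjk h'] using h

end Mono

section Gamma
variable {V : Type*} [DecidableEq V] [Fintype V]

lemma gammaMB'_eq_two (G : SimpleGraph V) (adj : V → V → Bool)
    (hadj : ∀ a b, G.Adj a b ↔ adj a b = true)
    (h2 : dwinSB adj 2 ∅ ∅ = true) (h1 : dwinSB adj 1 ∅ ∅ = false) :
    gammaMB' G = 2 := by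
  have hset : ∀ k : ℕ, DWinS G k (∅ : Set V) ∅ ↔ dwinSB adj k ∅ ∅ = true := by
    intro k
    have := dwinS_iff hadj k (∅ : Finset V) ∅
    simpa using this
  apply le_antisymm
  · exact sInf_le ⟨2, (hset 2).mpr h2, rfl⟩
  · apply le_sInf
    rintro x ⟨k, hk, rfl⟩
    have : 2 ≤ k := by
      by_contra h
      have hk1 : k ≤ 1 := by omega
      have := dwinS_le_mono hk1 hk
      rw [hset 1, h1] at this
      exact absurd this (by simp)
    exact_mod_cast this

lemma two_lt_gammaMB' (G : SimpleGraph V) (adj : V → V → Bool)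
    (hadj : ∀ a b, G.Adj a b ↔ adj a b = true)
    (h2 : dwinSB adj 2 ∅ ∅ = false) : 2 < gammaMB' G := by
  have hset : ∀ k : ℕ, DWinS G k (∅ : Set V) ∅ ↔ dwinSB adj k ∅ ∅ = true := by
    intro k
    have := dwinS_iff hadj k (∅ : Finset V) ∅
    simpa using this
  have h3 : (3 : ℕ∞) ≤ gammaMB' G := by
    apply le_sInf
    rintro x ⟨k, hk, rfl⟩
    have : 3 ≤ k := by
      by_contra h
      have hk2 : k ≤ 2 := by omega
      have := dwinS_le_mono hk2 hk
      rw [hset 2, h2] at this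
      exact absurd this (by simp)
    exact_mod_cast this
  calc (2 : ℕ∞) < 3 := by norm_num
    _ ≤ _ := h3

end Gamma

/-- The graph obtained from two disjoint copies of `K₃` and one additional vertex
`x = inl ()` by joining `x` to exactly one vertex in each copy of `K₃`. -/
def TwoTrianglesPlus : SimpleGraph (Unit ⊕ (Fin 3 ⊕ Fin 3)) :=
  SimpleGraph.fromRel (fun a b =>
    match a, b with
    | Sum.inr (Sum.inl _), Sum.inr (Sum.inl _) => True
    | Sum.inr (Sum.inr _), Sum.inr (Sum.inr _) => True
    | Sum.inl _, Sum.inr (Sum.inl i) => i.val = 0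
    | Sum.inl _, Sum.inr (Sum.inr i) => i.val = 0
    | _, _ => False)

abbrev VV := Unit ⊕ (Fin 3 ⊕ Fin 3)

def relB : VV → VV → Bool := fun a b =>
  match a, b with
  | Sum.inr (Sum.inl _), Sum.inr (Sum.inl _) => true
  | Sum.inr (Sum.inr _), Sum.inr (Sum.inr _) => true
  | Sum.inl _, Sum.inr (Sum.inl i) => i.val == 0
  | Sum.inl _, Sum.inr (Sum.inr i) => i.val == 0
  | _, _ => false

def adjB : VV → VV → Bool := fun a b => decide (a ≠ b) && (relB a b || relB b a)

lemma hadjB : ∀ a b, TwoTrianglesPlus.Adj a b ↔ adjB a b = true := by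
  intro a b
  rw [TwoTrianglesPlus, SimpleGraph.fromRel_adj]
  rcases a with a | a | a <;> rcases b with b | b | b <;>
    simp [adjB, relB]

def delAdj (adj : VV → VV → Bool) (u v : VV) : VV → VV → Bool :=
  fun a b => adj a b && !((decide (a = u) && decide (b = v)) || (decide (a = v) && decide (b = u)))

lemma hdelAdj {G : SimpleGraph VV} {adj : VV → VV → Bool}
    (hadj : ∀ a b, G.Adj a b ↔ adj a b = true) (u v : VV) :
    ∀ a b, (G.deleteEdges {s(u,v)}).Adj a b ↔ delAdj adj u v a b = true := by
  intro a b
  rw [SimpleGraph.deleteEdges_adj, hadj, delAdj]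
  simp [Sym2.eq_iff, not_or]
  tauto

set_option maxRecDepth 1000000 in
lemma keyDel : ∀ a b : VV, adjB a b = true → dwinSB (delAdj adjB a b) 2 ∅ ∅ = false := by
  decide


set_option maxRecDepth 1000000 in
/-- The graph obtained from two disjoint triangles by joining a new vertex `x` to exactly one
vertex of each triangle is `2`-`γ'_MB`-critical. -/
theorem twoTriangles_two_gammaMB'_critical :
    gammaMB' TwoTrianglesPlus = 2 ∧
      ∀ e ∈ TwoTrianglesPlus.edgeSet,
        gammaMB' TwoTrianglesPlus < gammaMB' (TwoTrianglesPlus.deleteEdges {e}) := by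
  have h2 : gammaMB' TwoTrianglesPlus = 2 :=
    gammaMB'_eq_two _ adjB hadjB (by decide) (by decide)
  refine ⟨h2, ?_⟩
  intro e he
  rw [h2]
  revert he
  induction e using Sym2.ind with
  | _ a b =>
    intro he
    rw [SimpleGraph.mem_edgeSet, hadjB] at he
    exact two_lt_gammaMB' _ (delAdj adjB a b) (hdelAdj hadjB a b) (keyDel a b he)
end

section
/- A graph G is 1-γ_SMB-critical if and only if G is isomorphic to 2K_1 (two isolated vertices) or to K_n ∪ 2K_1 for some n ≥ 1 (the disjoint union of a complete graph on n vertices and two isolated vertices). -/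
open MBD

/-- The disjoint union `K_n ∪ 2K₁` of a complete graph on `n` vertices and two isolated
vertices. -/
def KnUnionTwoK1 (n : ℕ) : SimpleGraph (Fin n ⊕ Fin 2) :=
  SimpleGraph.fromRel (fun a b => a.isLeft = true ∧ b.isLeft = true)

/-!
Staller wins with her first move exactly when an isolated vertex is still unselected after
Dominator's first move, so `γ_SMB(G) = 1` iff `G` has two isolated vertices, and `γ_SMB(G) ≥ 2`
otherwise. Hence `G` is `1`-critical iff it has two isolated vertices but adding any non-edge `uv`
leaves fewer than two isolated vertices outside `{u, v}`. Adding an edge between two vertices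
other than two fixed isolated ones `a, b` keeps `a, b` isolated, so all other vertices form a
clique. Conversely, in `K_n ∪ 2K₁` every independent set has at most three vertices, while `u`,
`v` and two isolated vertices outside `{u, v}` would be four.
-/

namespace MBD

variable {V : Type*} (G : SimpleGraph V)

lemma not_isStallerWin_empty : ¬ IsStallerWin G ∅ := fun ⟨_, h, _⟩ => h

lemma isStallerWin_singleton_iff (v : V) : IsStallerWin G {v} ↔ G.IsIsolated v := by
  constructor
  · rintro ⟨w, rfl, h⟩ u hadj
    exact G.irrefl (h u hadj ▸ hadj)
  · exact fun h => ⟨v, rfl, fun u hadj => absurd hadj (h u)⟩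

lemma not_sWinD_zero : ¬ SWinD G 0 ∅ ∅ := by
  rintro (h | ⟨⟨w, -⟩, h⟩)
  · exact not_isStallerWin_empty G h
  · exact not_isStallerWin_empty G (h w (by simp))

lemma sWin_one_iff (D : Set V) : SWin G 1 D ∅ ↔ ∃ v ∉ D, G.IsIsolated v := by
  simp only [SWin, Set.union_empty, insert_empty_eq, isStallerWin_singleton_iff,
    not_isStallerWin_empty, false_or]
  constructor
  · rintro ⟨v, hv, h | ⟨⟨w, hw⟩, h⟩⟩
    · exact ⟨v, hv, h⟩
    · exact ⟨v, hv, h w hw⟩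
  · rintro ⟨v, hv, h⟩
    exact ⟨v, hv, Or.inl h⟩

lemma sWinD_one_iff : SWinD G 1 ∅ ∅ ↔ G.supportᶜ.Nontrivial := by
  simp only [SWinD, not_isStallerWin_empty, Set.union_empty, insert_empty_eq, sWin_one_iff,
    Set.mem_singleton_iff, Set.notMem_empty, not_false_eq_true, forall_const,
    exists_true_iff_nonempty, false_or, Set.Nontrivial, Set.mem_compl_iff,
    SimpleGraph.notMem_support_iff_isIsolated]
  constructor
  · rintro ⟨⟨w⟩, h⟩
    obtain ⟨a, -, ha⟩ := h w
    obtain ⟨b, hba, hb⟩ := h a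
    exact ⟨a, ha, b, hb, Ne.symm hba⟩
  · rintro ⟨a, ha, b, hb, hab⟩
    refine ⟨⟨a⟩, fun w => ?_⟩
    rcases eq_or_ne a w with rfl | haw
    · exact ⟨b, hab.symm, hb⟩
    · exact ⟨a, haw, ha⟩

lemma one_le_gammaSMB : 1 ≤ gammaSMB G := by
  refine le_sInf ?_
  rintro _ ⟨k, hk, rfl⟩
  have : k ≠ 0 := by rintro rfl; exact not_sWinD_zero G hk
  exact_mod_cast Nat.one_le_iff_ne_zero.mpr this

lemma gammaSMB_eq_one_iff : gammaSMB G = 1 ↔ G.supportᶜ.Nontrivial := by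
  rw [← sWinD_one_iff]
  constructor
  · intro h
    have hne : (Nat.cast '' {k | SWinD G k ∅ ∅} : Set ℕ∞).Nonempty := by
      by_contra hemp
      rw [Set.not_nonempty_iff_eq_empty] at hemp
      simp [gammaSMB, hemp] at h
    obtain ⟨k, hk, hk1⟩ := csInf_mem hne
    rw [← gammaSMB, h, Nat.cast_eq_one] at hk1
    exact hk1 ▸ hk
  · intro h
    exact le_antisymm (sInf_le ⟨1, h, Nat.cast_one⟩) (one_le_gammaSMB G)

lemma gammaSMB_lt_iff_of_gammaSMB_eq_one {W : Type*} {H : SimpleGraph W}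
    (hG : gammaSMB G = 1) : gammaSMB G < gammaSMB H ↔ ¬ H.supportᶜ.Nontrivial := by
  rw [hG, lt_iff_le_and_ne, ← gammaSMB_eq_one_iff, eq_comm]
  exact and_iff_right (one_le_gammaSMB H)

end MBD

namespace SimpleGraph

variable {V : Type*} (G : SimpleGraph V)

lemma support_sup_edge {u v : V} (huv : u ≠ v) :
    (G ⊔ edge u v).support = G.support ∪ {u, v} := by
  ext w
  simp only [mem_support, sup_adj, edge_adj, Set.mem_union, Set.mem_insert_iff,
    Set.mem_singleton_iff]
  aesop

structure IsKnUnionTwoK1At (a b : V) : Prop where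
  ne : a ≠ b
  adj_iff : ∀ x y, G.Adj x y ↔ x ≠ y ∧ x ≠ a ∧ x ≠ b ∧ y ≠ a ∧ y ≠ b

namespace IsKnUnionTwoK1At

variable {G} {a b : V}

lemma isIsolated_left (h : G.IsKnUnionTwoK1At a b) : G.IsIsolated a := fun y hy =>
  ((h.adj_iff a y).1 hy).2.1 rfl

lemma isIsolated_right (h : G.IsKnUnionTwoK1At a b) : G.IsIsolated b := fun y hy =>
  ((h.adj_iff b y).1 hy).2.2.1 rfl

lemma encard_le_three_of_isIndepSet (h : G.IsKnUnionTwoK1At a b) {s : Set V}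
    (hs : G.IsIndepSet s) : s.encard ≤ 3 := by
  have hrest : (s \ {a, b}).Subsingleton := by
    rintro x ⟨hxs, hx⟩ y ⟨hys, hy⟩
    by_contra hxy
    simp only [Set.mem_insert_iff, Set.mem_singleton_iff, not_or] at hx hy
    exact hs hxs hys hxy ((h.adj_iff x y).2 ⟨hxy, hx.1, hx.2, hy.1, hy.2⟩)
  calc s.encard ≤ (s \ {a, b} ∪ {a, b}).encard :=
        Set.encard_le_encard (Set.subset_sdiff_union _ _)
    _ ≤ (s \ {a, b}).encard + ({a, b} : Set V).encard := Set.encard_union_le _ _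
    _ ≤ 1 + 2 := by
      rw [Set.encard_pair h.ne]
      exact add_le_add_left (Set.encard_le_one_iff_subsingleton.2 hrest) _
    _ = 3 := by norm_num

lemma of_iso {W : Type*} {H : SimpleGraph W} (f : G ≃g H) {a b : W}
    (h : H.IsKnUnionTwoK1At a b) : G.IsKnUnionTwoK1At (f.symm a) (f.symm b) where
  ne := f.symm.injective.ne h.ne
  adj_iff x y := by
    rw [← f.map_adj_iff, h.adj_iff, f.injective.ne_iff]
    simp only [ne_eq, RelIso.eq_symm_apply]

end IsKnUnionTwoK1At

theorem exists_isKnUnionTwoK1At_iff :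
    (∃ a b, G.IsKnUnionTwoK1At a b) ↔
      G.supportᶜ.Nontrivial ∧
        ∀ u v, u ≠ v → ¬ G.Adj u v → ¬ (G ⊔ edge u v).supportᶜ.Nontrivial := by
  constructor
  · rintro ⟨a, b, h⟩
    refine ⟨⟨a, (notMem_support_iff_isIsolated G).2 h.isIsolated_left, b,
      (notMem_support_iff_isIsolated G).2 h.isIsolated_right, h.ne⟩, ?_⟩
    rintro u v huv hnadj ⟨a', ha', b', hb', hab'⟩
    simp only [support_sup_edge G huv, Set.mem_compl_iff, Set.mem_union, Set.mem_insert_iff,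
      Set.mem_singleton_iff, not_or, notMem_support_iff_isIsolated] at ha' hb'
    -- `u`, `v` and two vertices still isolated after adding `uv` are 4 independent vertices
    have hindep : G.IsIndepSet {a', b', u, v} := by
      rw [← isClique_compl]
      simp only [isClique_insert, isClique_singleton, compl_adj, Set.mem_insert_iff,
        Set.mem_singleton_iff]
      exact ⟨⟨⟨trivial, fun _ hv hne => ⟨hne, hv ▸ hnadj⟩⟩,
        fun _ _ hne => ⟨hne, hb'.1 _⟩⟩, fun _ _ hne => ⟨hne, ha'.1 _⟩⟩
    have hcard : ({a', b', u, v} : Set V).encard = 4 := by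
      rw [Set.encard_insert_of_notMem (by simp [hab', ha'.2.1, ha'.2.2]),
        Set.encard_insert_of_notMem (by simp [hb'.2.1, hb'.2.2]),
        Set.encard_insert_of_notMem (by simp [huv]), Set.encard_singleton]
      norm_num
    have := h.encard_le_three_of_isIndepSet hindep
    rw [hcard] at this
    norm_num at this
  · rintro ⟨⟨a, ha, b, hb, hab⟩, hmax⟩
    rw [Set.mem_compl_iff, notMem_support_iff_isIsolated] at ha hb
    refine ⟨a, b, hab, fun x y => ⟨fun hxy => ?_, fun ⟨hxy, hxa, hxb, hya, hyb⟩ => ?_⟩⟩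
    · exact ⟨hxy.ne, fun hxa => ha y (hxa ▸ hxy), fun hxb => hb y (hxb ▸ hxy),
        fun hya => ha x (hya ▸ hxy.symm), fun hyb => hb x (hyb ▸ hxy.symm)⟩
    · by_contra hnadj
      refine hmax x y hxy hnadj ⟨a, ?_, b, ?_, hab⟩ <;>
        simp [support_sup_edge G hxy, *, Ne.symm]

end SimpleGraph

lemma knUnionTwoK1_adj (n : ℕ) (x y : Fin n ⊕ Fin 2) :
    (KnUnionTwoK1 n).Adj x y ↔ x ≠ y ∧ x.isLeft ∧ y.isLeft := by
  simp only [KnUnionTwoK1, SimpleGraph.fromRel_adj]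
  tauto

lemma isKnUnionTwoK1At_knUnionTwoK1 (n : ℕ) :
    (KnUnionTwoK1 n).IsKnUnionTwoK1At (.inr 0) (.inr 1) where
  ne := by simp
  adj_iff x y := by
    have hleft : ∀ z : Fin n ⊕ Fin 2, z.isLeft ↔ z ≠ .inr 0 ∧ z ≠ .inr 1 := by
      rintro (i | i)
      · simp
      · fin_cases i <;> simp
    rw [knUnionTwoK1_adj, hleft, hleft, and_assoc]

def knUnionTwoK1ZeroIsoBot : KnUnionTwoK1 0 ≃g (⊥ : SimpleGraph (Fin 2)) where
  toEquiv := Equiv.emptySum (Fin 0) (Fin 2)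
  map_rel_iff' {x y} := by
    rcases x with x | x
    · exact x.elim0
    · simp [knUnionTwoK1_adj]

namespace SimpleGraph.IsKnUnionTwoK1At

variable {V : Type*} {G : SimpleGraph V} {a b : V}

lemma exists_iso [Fintype V] (h : G.IsKnUnionTwoK1At a b) :
    ∃ n, Nonempty (G ≃g KnUnionTwoK1 n) := by
  classical
  let p : V → Prop := fun x => x = a ∨ x = b
  have hcard : Fintype.card {x // p x} = 2 := by
    rw [Fintype.card_subtype, ← Finset.card_pair h.ne]
    congr 1
    ext x
    simp [p]
  let e : V ≃ Fin (Fintype.card {x // ¬ p x}) ⊕ Fin 2 :=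
    (Equiv.sumCompl p).symm.trans ((Equiv.sumComm _ _).trans
      (Equiv.sumCongr (Fintype.equivFin _) (Fintype.equivFinOfCardEq hcard)))
  have hleft (x : V) : (e x).isLeft ↔ ¬ p x := by
    by_cases hx : p x
    · simp [e, Equiv.sumCompl_symm_apply_of_pos hx, hx]
    · simp [e, Equiv.sumCompl_symm_apply_of_neg hx, hx]
  refine ⟨_, ⟨e, fun {x y} => ?_⟩⟩
  rw [knUnionTwoK1_adj, e.injective.ne_iff, hleft, hleft, h.adj_iff]
  simp only [p, not_or, and_assoc]

end SimpleGraph.IsKnUnionTwoK1At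

lemma exists_iso_knUnionTwoK1_iff {V : Type*} [Fintype V] (G : SimpleGraph V) :
    (∃ n, Nonempty (G ≃g KnUnionTwoK1 n)) ↔ ∃ a b, G.IsKnUnionTwoK1At a b :=
  ⟨fun ⟨n, ⟨f⟩⟩ => ⟨_, _, (isKnUnionTwoK1At_knUnionTwoK1 n).of_iso f⟩,
    fun ⟨_, _, h⟩ => h.exists_iso⟩

lemma nonempty_iso_bot_or_exists_iff {V : Type*} (G : SimpleGraph V) :
    (Nonempty (G ≃g (⊥ : SimpleGraph (Fin 2))) ∨
        ∃ n : ℕ, 1 ≤ n ∧ Nonempty (G ≃g KnUnionTwoK1 n)) ↔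
      ∃ n, Nonempty (G ≃g KnUnionTwoK1 n) := by
  constructor
  · rintro (⟨⟨f⟩⟩ | ⟨n, -, hf⟩)
    · exact ⟨0, ⟨f.trans knUnionTwoK1ZeroIsoBot.symm⟩⟩
    · exact ⟨n, hf⟩
  · rintro ⟨_ | n, ⟨f⟩⟩
    · exact Or.inl ⟨f.trans knUnionTwoK1ZeroIsoBot⟩
    · exact Or.inr ⟨n + 1, n.succ_pos, ⟨f⟩⟩

/-- A (finite) graph `G` is `1`-`γ_SMB`-critical if and only if `G` is isomorphic to `2K₁`
(two isolated vertices) or to `K_n ∪ 2K₁` for some `n ≥ 1`. -/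
theorem one_gammaSMB_critical_iff {V : Type*} [Fintype V] (G : SimpleGraph V) :
    (gammaSMB G = 1 ∧ ∀ u v : V, u ≠ v → ¬ G.Adj u v →
        gammaSMB G < gammaSMB (G ⊔ SimpleGraph.fromEdgeSet {s(u, v)})) ↔
      (Nonempty (G ≃g (⊥ : SimpleGraph (Fin 2))) ∨
        ∃ n : ℕ, 1 ≤ n ∧ Nonempty (G ≃g KnUnionTwoK1 n)) := by
  rw [nonempty_iso_bot_or_exists_iff, exists_iso_knUnionTwoK1_iff,
    SimpleGraph.exists_isKnUnionTwoK1At_iff, gammaSMB_eq_one_iff]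
  refine and_congr_right fun h => forall₄_congr fun u v _ _ => ?_
  exact gammaSMB_lt_iff_of_gammaSMB_eq_one G ((gammaSMB_eq_one_iff G).2 h)
end
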